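/- In the 3-player game H4(u) with u > 0, on actions {G,⊥} with payoffs (G,G,G)→(2u,−u,−u), (G,G,⊥)→(−3,−3,0), (G,⊥,G)→(−3,0,−3), (G,⊥,⊥)→(−2,−2,−2), (⊥,G,G)→(0,−3,−3), (⊥,G,⊥)→(−2,−2,−2), (⊥,⊥,G)→(−2,−2,−2), (⊥,⊥,⊥)→(−1,−1,−1), the only Nash equilibrium is the pure strategy profile (⊥,⊥,⊥); when u = 0 the only Nash equilibria are (G,G,G) and (⊥,⊥,⊥), and (G,G,G) is both Pareto optimal and a strong Nash equilibrium. -/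
import Mathlib


open Set

/-- Expected payoff in a 3-player game where each player has two actions
(`true` = G, `false` = ⊥), given the probabilities `p q r` of playing G. -/
noncomputable def exp3 (f : Bool → Bool → Bool → ℝ) (p q r : ℝ) : ℝ :=
  p*q*r * f true true true + p*q*(1-r) * f true true false +
  p*(1-q)*r * f true false true + p*(1-q)*(1-r) * f true false false +
  (1-p)*q*r * f false true true + (1-p)*q*(1-r) * f false true false +
  (1-p)*(1-q)*r * f false false true + (1-p)*(1-q)*(1-r) * f false false false

/-- Payoff to player `i` in the game H4(u); `true` = G, `false` = ⊥. -/
noncomputable def H4 (u : ℝ) (i : Fin 3) (a b c : Bool) : ℝ :=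
  match a, b, c with
  | true,  true,  true  => ![2*u, -u, -u] i
  | true,  true,  false => ![-3, -3, 0] i
  | true,  false, true  => ![-3, 0, -3] i
  | true,  false, false => ![-2, -2, -2] i
  | false, true,  true  => ![0, -3, -3] i
  | false, true,  false => ![-2, -2, -2] i
  | false, false, true  => ![-2, -2, -2] i
  | false, false, false => ![-1, -1, -1] i

/-- `(p,q,r)` is a (mixed) Nash equilibrium of H4(u). -/
def H4NE (u p q r : ℝ) : Prop :=
  p ∈ Icc (0:ℝ) 1 ∧ q ∈ Icc (0:ℝ) 1 ∧ r ∈ Icc (0:ℝ) 1 ∧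
  (∀ p' ∈ Icc (0:ℝ) 1, exp3 (H4 u 0) p' q r ≤ exp3 (H4 u 0) p q r) ∧
  (∀ q' ∈ Icc (0:ℝ) 1, exp3 (H4 u 1) p q' r ≤ exp3 (H4 u 1) p q r) ∧
  (∀ r' ∈ Icc (0:ℝ) 1, exp3 (H4 u 2) p q r' ≤ exp3 (H4 u 2) p q r)

/-- `(p,q,r)` is Pareto optimal in H4(u). -/
def H4Pareto (u p q r : ℝ) : Prop :=
  ¬ ∃ p' ∈ Icc (0:ℝ) 1, ∃ q' ∈ Icc (0:ℝ) 1, ∃ r' ∈ Icc (0:ℝ) 1,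
      (∀ i : Fin 3, exp3 (H4 u i) p q r ≤ exp3 (H4 u i) p' q' r') ∧
      (∃ j : Fin 3, exp3 (H4 u j) p q r < exp3 (H4 u j) p' q' r')

/-- `(p,q,r)` is a strong Nash equilibrium of H4(u). -/
def H4StrongNE (u p q r : ℝ) : Prop :=
  p ∈ Icc (0:ℝ) 1 ∧ q ∈ Icc (0:ℝ) 1 ∧ r ∈ Icc (0:ℝ) 1 ∧
  ∀ p' ∈ Icc (0:ℝ) 1, ∀ q' ∈ Icc (0:ℝ) 1, ∀ r' ∈ Icc (0:ℝ) 1,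
    ¬ (p' = p ∧ q' = q ∧ r' = r) →
    (p' ≠ p ∧ exp3 (H4 u 0) p' q' r' ≤ exp3 (H4 u 0) p q r) ∨
    (q' ≠ q ∧ exp3 (H4 u 1) p' q' r' ≤ exp3 (H4 u 1) p q r) ∨
    (r' ≠ r ∧ exp3 (H4 u 2) p' q' r' ≤ exp3 (H4 u 2) p q r)

lemma e0 (u p q r : ℝ) : exp3 (H4 u 0) p q r = p*((2*u+1)*q*r - 1) + 3*q*r - q - r - 1 := by
  simp [exp3, H4]; ring
lemma e1 (u p q r : ℝ) : exp3 (H4 u 1) p q r = q*((1-u)*p*r - 1) + 3*p*r - p - r - 1 := by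
  simp [exp3, H4]; ring
lemma e2 (u p q r : ℝ) : exp3 (H4 u 2) p q r = r*((1-u)*p*q - 1) + 3*p*q - p - q - 1 := by
  simp [exp3, H4]; ring

lemma sumle (p q r : ℝ) (hp0 : 0 ≤ p) (hp1 : p ≤ 1) (hq0 : 0 ≤ q) (hq1 : q ≤ 1)
    (hr0 : 0 ≤ r) (hr1 : r ≤ 1) :
    3*(p*(q*r)) + 3*(p*q + q*r + r*p) - 3*(p+q+r) - 3 ≤ 0 := by
  have hqr : q*r ≤ 1 := mul_le_one₀ hq1 hr0 hr1
  have hA : 0 ≤ p*(1 - q*r) := mul_nonneg hp0 (by linarith)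
  have h2 : (1-q)*(1-r) ≤ 1 := by nlinarith
  have hB : 0 ≤ (1-p)*(1 - (1-q)*(1-r)) := mul_nonneg (by linarith) (by linarith)
  nlinarith [hA, hB]

/-- For u > 0 the only Nash equilibrium of H4(u) is (⊥,⊥,⊥); for u = 0 the only
Nash equilibria are (G,G,G) and (⊥,⊥,⊥), and (G,G,G) is both Pareto optimal and a
strong Nash equilibrium. -/
theorem stmt8 :
    (∀ u : ℝ, 0 < u → ∀ p q r : ℝ, (H4NE u p q r ↔ p = 0 ∧ q = 0 ∧ r = 0)) ∧
    (∀ p q r : ℝ,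
      H4NE 0 p q r ↔ (p = 0 ∧ q = 0 ∧ r = 0) ∨ (p = 1 ∧ q = 1 ∧ r = 1)) ∧
    H4Pareto 0 1 1 1 ∧
    H4StrongNE 0 1 1 1 := by
  have h01 : (0:ℝ) ∈ Icc (0:ℝ) 1 := by norm_num
  have h11 : (1:ℝ) ∈ Icc (0:ℝ) 1 := by norm_num
  refine ⟨?_, ?_, ?_, ?_⟩
  · -- u > 0 case
    intro u hu p q r
    constructor
    · rintro ⟨hp, hq, hr, h1, h2, h3⟩
      -- player 2's coefficient is negative
      have hA2 : (1-u)*p*r - 1 < 0 := by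
        rcases lt_or_ge (p*r) 1 with h | h
        · nlinarith [mul_nonneg hu.le (mul_nonneg hp.1 hr.1)]
        · have : p*r ≤ 1 := mul_le_one₀ hp.2 hr.1 hr.2
          nlinarith
      have hq0 : q = 0 := by
        have h := h2 0 h01
        rw [e1, e1] at h
        nlinarith [hq.1]
      have hp0 : p = 0 := by
        have h := h1 0 h01
        rw [e0, e0, hq0] at h
        nlinarith [hp.1]
      have hr0 : r = 0 := by
        have h := h3 0 h01
        rw [e2, e2, hq0] at h
        nlinarith [hr.1]
      exact ⟨hp0, hq0, hr0⟩
    · rintro ⟨hp, hq, hr⟩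
      subst hp; subst hq; subst hr
      refine ⟨h01, h01, h01, ?_, ?_, ?_⟩
      · intro p' hp'; rw [e0, e0]; nlinarith [hp'.1]
      · intro q' hq'; rw [e1, e1]; nlinarith [hq'.1]
      · intro r' hr'; rw [e2, e2]; nlinarith [hr'.1]
  · -- u = 0 case
    intro p q r
    constructor
    · rintro ⟨hp, hq, hr, h1, h2, h3⟩
      have hP0 : p*(q*r - 1) ≥ 0 := by
        have h := h1 0 h01; rw [e0, e0] at h; nlinarith
      have hQ0 : q*(p*r - 1) ≥ 0 := by
        have h := h2 0 h01; rw [e1, e1] at h; nlinarith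
      have hR0 : r*(p*q - 1) ≥ 0 := by
        have h := h3 0 h01; rw [e2, e2] at h; nlinarith
      have hqr : q*r ≤ 1 := mul_le_one₀ hq.2 hr.1 hr.2
      rcases eq_or_lt_of_le hqr with h | h
      · -- q*r = 1 forces q = r = 1, then p = 1
        have hq1 : q = 1 := by
          have : 1 ≤ q := by nlinarith [hq.1, hr.2]
          linarith [hq.2]
        have hr1 : r = 1 := by
          have : 1 ≤ r := by nlinarith [hr.1, hq.2]
          linarith [hr.2]
        have hp1 : p = 1 := by
          subst hq1; subst hr1
          have : 1 ≤ p := by nlinarith [mul_one p]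
          linarith [hp.2]
        exact Or.inr ⟨hp1, hq1, hr1⟩
      · have hp0 : p = 0 := by
          have : p ≤ 0 := by nlinarith [hp.1]
          linarith [hp.1]
        have hq0 : q = 0 := by
          subst hp0
          have : q ≤ 0 := by nlinarith [hq.1]
          linarith [hq.1]
        have hr0 : r = 0 := by
          subst hp0; subst hq0
          have : r ≤ 0 := by nlinarith [hr.1]
          linarith [hr.1]
        exact Or.inl ⟨hp0, hq0, hr0⟩
    · rintro (⟨hp, hq, hr⟩ | ⟨hp, hq, hr⟩) <;> subst hp <;> subst hq <;> subst hr
      · refine ⟨h01, h01, h01, ?_, ?_, ?_⟩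
        · intro p' hp'; rw [e0, e0]; nlinarith [hp'.1]
        · intro q' hq'; rw [e1, e1]; nlinarith [hq'.1]
        · intro r' hr'; rw [e2, e2]; nlinarith [hr'.1]
      · refine ⟨h11, h11, h11, ?_, ?_, ?_⟩
        · intro p' hp'; rw [e0, e0]; nlinarith
        · intro q' hq'; rw [e1, e1]; nlinarith
        · intro r' hr'; rw [e2, e2]; nlinarith
  · -- Pareto optimality of (1,1,1) at u = 0
    rintro ⟨p, hp, q, hq, r, hr, hall, j, hj⟩
    have h0 := hall 0
    have h1 := hall 1
    have h2 := hall 2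
    rw [e0, e0] at h0
    rw [e1, e1] at h1
    rw [e2, e2] at h2
    have key := sumle p q r hp.1 hp.2 hq.1 hq.2 hr.1 hr.2
    fin_cases j
    · have hj' : exp3 (H4 0 0) 1 1 1 < exp3 (H4 0 0) p q r := hj
      rw [e0, e0] at hj'; nlinarith [h1, h2, key, hj']
    · have hj' : exp3 (H4 0 1) 1 1 1 < exp3 (H4 0 1) p q r := hj
      rw [e1, e1] at hj'; nlinarith [h0, h2, key, hj']
    · have hj' : exp3 (H4 0 2) 1 1 1 < exp3 (H4 0 2) p q r := hj
      rw [e2, e2] at hj'; nlinarith [h0, h1, key, hj']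
  · -- Strong Nash of (1,1,1) at u = 0
    refine ⟨h11, h11, h11, ?_⟩
    intro p hp q hq r hr hne
    by_cases hp1 : p = 1 <;> by_cases hq1 : q = 1 <;> by_cases hr1 : r = 1
    · exact absurd ⟨hp1, hq1, hr1⟩ hne
    · refine Or.inr (Or.inr ⟨hr1, ?_⟩)
      subst hp1; subst hq1; rw [e2, e2]; nlinarith
    · refine Or.inr (Or.inl ⟨hq1, ?_⟩)
      subst hp1; subst hr1; rw [e1, e1]; nlinarith
    · -- q ≠ 1, r ≠ 1, p = 1 : player 2 payoff ≤ 0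
      refine Or.inr (Or.inl ⟨hq1, ?_⟩)
      subst hp1; rw [e1, e1]; nlinarith [hq.1, hr.2]
    · refine Or.inl ⟨hp1, ?_⟩
      subst hq1; subst hr1; rw [e0, e0]; nlinarith
    · -- p ≠ 1, r ≠ 1, q = 1 : player 1 payoff ≤ 0
      refine Or.inl ⟨hp1, ?_⟩
      subst hq1; rw [e0, e0]; nlinarith [hp.1, hr.2]
    · -- p ≠ 1, q ≠ 1 : player 1 payoff ≤ 0
      refine Or.inl ⟨hp1, ?_⟩
      subst hr1; rw [e0, e0]; nlinarith [hp.1, hq.2]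
    · -- all deviate: some payoff ≤ 0 since the sum is ≤ 0
      by_contra hcon
      push_neg at hcon
      obtain ⟨c1, c2, c3⟩ := hcon
      have g1 := c1 hp1
      have g2 := c2 hq1
      have g3 := c3 hr1
      rw [e0, e0] at g1; rw [e1, e1] at g2; rw [e2, e2] at g3
      have key := sumle p q r hp.1 hp.2 hq.1 hq.2 hr.1 hr.2
      nlinarith [g1, g2, g3, key]
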